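/- (Hardy–Littlewood lower bound) For nonnegative random variables X and ρ on a probability space, E[ρX] ≥ ∫₀¹ Q_X(s) Q_ρ(1-s) ds. -/

import Mathlib

noncomputable def quantile {Ω : Type*} [MeasurableSpace Ω] (P : MeasureTheory.Measure Ω) (Y : Ω → ℝ) (t : ℝ) : ℝ :=
  sInf {z : ℝ | P {ω | Y ω ≤ z} > ENNReal.ofReal t}

/-
Both sides are layer-cake integrals: `∫ f g = ∫∫_{u,v > 0} μ {u < f, v < g} du dv`.
For fixed `u, v`, every `s ∈ (0,1)` with `u < Q_X(s)` and `v < Q_ρ(1 - s)` satisfies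
`P {X ≤ u} ≤ s ≤ 1 - P {ρ ≤ v}`, so these `s` have Lebesgue measure at most
`1 - P {X ≤ u} - P {ρ ≤ v}`, which by the union bound is at most `P {u < X, v < ρ}`.
-/

open MeasureTheory Set Filter
open scoped ENNReal

section Quantile

variable {Ω : Type*} [MeasurableSpace Ω] (P : Measure Ω) {Y : Ω → ℝ}

lemma quantile_set_subset_Ici (hY : ∀ ω, 0 ≤ Y ω) (t : ℝ) :
    {z : ℝ | P {ω | Y ω ≤ z} > ENNReal.ofReal t} ⊆ Ici 0 := by
  intro z hz
  obtain ⟨ω, hω⟩ := nonempty_of_measure_ne_zero (pos_of_gt hz).ne'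
  exact (hY ω).trans hω

lemma quantile_set_bddBelow (hY : ∀ ω, 0 ≤ Y ω) (t : ℝ) :
    BddBelow {z : ℝ | P {ω | Y ω ≤ z} > ENNReal.ofReal t} :=
  bddBelow_Ici.mono (quantile_set_subset_Ici P hY t)

lemma quantile_nonneg (hY : ∀ ω, 0 ≤ Y ω) (t : ℝ) : 0 ≤ quantile P Y t :=
  Real.sInf_nonneg fun _ hz => quantile_set_subset_Ici P hY t hz

lemma measure_le_of_lt_quantile (hY : ∀ ω, 0 ≤ Y ω) {s u : ℝ} (hu : u < quantile P Y s) :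
    P {ω | Y ω ≤ u} ≤ ENNReal.ofReal s :=
  not_lt.mp fun hmem => (csInf_le (quantile_set_bddBelow P hY s) hmem).not_gt hu

lemma quantile_monotoneOn [IsProbabilityMeasure P] (hY : ∀ ω, 0 ≤ Y ω) :
    MonotoneOn (quantile P Y) (Iio 1) := by
  intro s _ t ht hst
  have hne : {z : ℝ | P {ω | Y ω ≤ z} > ENNReal.ofReal t}.Nonempty := by
    have hlim := tendsto_measure_iUnion_atTop (μ := P)
      (s := fun z : ℝ => {ω | Y ω ≤ z}) fun _ _ h _ hω => le_trans hω h
    have hcover : (⋃ z : ℝ, {ω | Y ω ≤ z}) = univ :=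
      eq_univ_of_forall fun ω => mem_iUnion.mpr ⟨Y ω, le_refl (Y ω)⟩
    rw [hcover, measure_univ] at hlim
    have ht1 : ENNReal.ofReal t < 1 := ENNReal.ofReal_lt_one.mpr ht
    exact (hlim.eventually (lt_mem_nhds ht1)).exists
  exact csInf_le_csInf (quantile_set_bddBelow P hY s) hne
    fun z hz => (ENNReal.ofReal_le_ofReal hst).trans_lt hz

end Quantile

lemma volume_Ioi_zero_restrict_Iio (x : ℝ) :
    volume.restrict (Ioi (0 : ℝ)) (Iio x) = ENNReal.ofReal x := by
  rw [Measure.restrict_apply measurableSet_Iio, Iio_inter_Ioi, Real.volume_Ioo, sub_zero]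

theorem lintegral_ofReal_mul_ofReal_eq_lintegral_measure {α : Type*} [MeasurableSpace α]
    (μ : Measure α) [SFinite μ] {f g : α → ℝ} (hf : Measurable f) (hg : Measurable g) :
    ∫⁻ a, ENNReal.ofReal (f a) * ENNReal.ofReal (g a) ∂μ
      = ∫⁻ uv : ℝ × ℝ, μ {a | uv.1 < f a ∧ uv.2 < g a}
          ∂((volume.restrict (Ioi 0)).prod (volume.restrict (Ioi 0))) := by
  set ν : Measure ℝ := volume.restrict (Ioi 0)
  set T : Set (α × ℝ × ℝ) := {p | p.2.1 < f p.1 ∧ p.2.2 < g p.1}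
  have hT : MeasurableSet ({p : α × ℝ × ℝ | p.2.1 < f p.1} ∩ {p | p.2.2 < g p.1}) :=
    (measurableSet_lt (by fun_prop) (by fun_prop)).inter
      (measurableSet_lt (by fun_prop) (by fun_prop))
  calc ∫⁻ a, ENNReal.ofReal (f a) * ENNReal.ofReal (g a) ∂μ
      = ∫⁻ a, ν.prod ν (Prod.mk a ⁻¹' T) ∂μ := by
        refine lintegral_congr fun a => ?_
        rw [show Prod.mk a ⁻¹' T = Iio (f a) ×ˢ Iio (g a) from rfl, Measure.prod_prod,
          volume_Ioi_zero_restrict_Iio, volume_Ioi_zero_restrict_Iio]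
    _ = μ.prod (ν.prod ν) T := (Measure.prod_apply hT).symm
    _ = ∫⁻ uv, μ {a | uv.1 < f a ∧ uv.2 < g a} ∂(ν.prod ν) := Measure.prod_apply_symm hT

theorem lintegral_ofReal_mul_ofReal_eq_lintegral_measure_of_aemeasurable {α : Type*}
    [MeasurableSpace α] (μ : Measure α) [SFinite μ] {f g : α → ℝ}
    (hf : AEMeasurable f μ) (hg : AEMeasurable g μ) :
    ∫⁻ a, ENNReal.ofReal (f a) * ENNReal.ofReal (g a) ∂μ
      = ∫⁻ uv : ℝ × ℝ, μ {a | uv.1 < f a ∧ uv.2 < g a}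
          ∂((volume.restrict (Ioi 0)).prod (volume.restrict (Ioi 0))) := by
  calc ∫⁻ a, ENNReal.ofReal (f a) * ENNReal.ofReal (g a) ∂μ
      = ∫⁻ a, ENNReal.ofReal (hf.mk f a) * ENNReal.ofReal (hg.mk g a) ∂μ := by
        refine lintegral_congr_ae ?_
        filter_upwards [hf.ae_eq_mk, hg.ae_eq_mk] with a hfa hga
        rw [hfa, hga]
    _ = _ := lintegral_ofReal_mul_ofReal_eq_lintegral_measure μ hf.measurable_mk hg.measurable_mk
    _ = _ := by
        refine lintegral_congr fun uv => measure_congr ?_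
        rw [eventuallyEq_set]
        filter_upwards [hf.ae_eq_mk, hg.ae_eq_mk] with a hfa hga
        simp only [hfa, hga]

lemma one_sub_sub_le_prob_compl_inter {Ω : Type*} [MeasurableSpace Ω] (P : Measure Ω)
    [IsProbabilityMeasure P] (s t : Set Ω) : 1 - P t - P s ≤ P (sᶜ ∩ tᶜ) := by
  rw [tsub_le_iff_right, tsub_le_iff_right, ← measure_univ (μ := P)]
  calc P univ = P (sᶜ ∩ tᶜ ∪ (s ∪ t)) := by rw [← compl_union, compl_union_self]
    _ ≤ P (sᶜ ∩ tᶜ) + (P s + P t) :=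
        (measure_union_le _ _).trans (add_le_add_right (measure_union_le _ _) _)
    _ = P (sᶜ ∩ tᶜ) + P s + P t := by ring

lemma volume_restrict_Ioo_setOf_le_ofReal_le {a b : ℝ≥0∞} (ha : a ≠ ∞) (hb : b ≠ ∞) :
    volume.restrict (Ioo (0 : ℝ) 1) {s | a ≤ ENNReal.ofReal s ∧ b ≤ ENNReal.ofReal (1 - s)}
      ≤ 1 - b - a := by
  have hsub : {s : ℝ | a ≤ ENNReal.ofReal s ∧ b ≤ ENNReal.ofReal (1 - s)} ∩ Ioo 0 1
      ⊆ Icc a.toReal (1 - b.toReal) := by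
    rintro s ⟨⟨has, hbs⟩, hs0, hs1⟩
    have hb' := (ENNReal.le_ofReal_iff_toReal_le hb (by linarith)).mp hbs
    exact ⟨(ENNReal.le_ofReal_iff_toReal_le ha hs0.le).mp has, by linarith⟩
  calc _ ≤ volume (Icc a.toReal (1 - b.toReal)) :=
        (Measure.restrict_apply' measurableSet_Ioo).trans_le (measure_mono hsub)
    _ = 1 - b - a := by
        rw [Real.volume_Icc, ENNReal.ofReal_sub _ ENNReal.toReal_nonneg,
          ENNReal.ofReal_sub _ ENNReal.toReal_nonneg, ENNReal.ofReal_one,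
          ENNReal.ofReal_toReal ha, ENNReal.ofReal_toReal hb]

lemma volume_restrict_lt_quantile_and_lt_quantile_one_sub_le {Ω : Type*} [MeasurableSpace Ω]
    (P : Measure Ω) [IsProbabilityMeasure P] {X ρ : Ω → ℝ} (hXnn : ∀ ω, 0 ≤ X ω)
    (hρnn : ∀ ω, 0 ≤ ρ ω) (u v : ℝ) :
    volume.restrict (Ioo (0 : ℝ) 1) {s | u < quantile P X s ∧ v < quantile P ρ (1 - s)}
      ≤ P {ω | u < X ω ∧ v < ρ ω} :=
  calc _ ≤ volume.restrict (Ioo (0 : ℝ) 1)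
        {s | P {ω | X ω ≤ u} ≤ ENNReal.ofReal s ∧ P {ω | ρ ω ≤ v} ≤ ENNReal.ofReal (1 - s)} :=
        measure_mono fun _ hs =>
          ⟨measure_le_of_lt_quantile P hXnn hs.1, measure_le_of_lt_quantile P hρnn hs.2⟩
    _ ≤ 1 - P {ω | ρ ω ≤ v} - P {ω | X ω ≤ u} :=
        volume_restrict_Ioo_setOf_le_ofReal_le (measure_ne_top _ _) (measure_ne_top _ _)
    _ ≤ P ({ω | X ω ≤ u}ᶜ ∩ {ω | ρ ω ≤ v}ᶜ) := one_sub_sub_le_prob_compl_inter P _ _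
    _ = P {ω | u < X ω ∧ v < ρ ω} := by simp only [compl_ofPred, not_le]; rfl

theorem stmt_11 {Ω : Type*} [MeasurableSpace Ω] (P : MeasureTheory.Measure Ω)
    [MeasureTheory.IsProbabilityMeasure P] (X ρ : Ω → ℝ)
    (hX : Measurable X) (hρ : Measurable ρ)
    (hXnn : ∀ ω, 0 ≤ X ω) (hρnn : ∀ ω, 0 ≤ ρ ω) :
    ∫⁻ s in Set.Ioo (0:ℝ) 1, ENNReal.ofReal (quantile P X s * quantile P ρ (1 - s))
      ≤ ∫⁻ ω, ENNReal.ofReal (ρ ω * X ω) ∂P := by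
  have hA : AEMeasurable (quantile P X) (volume.restrict (Ioo 0 1)) :=
    aemeasurable_restrict_of_monotoneOn measurableSet_Ioo
      ((quantile_monotoneOn P hXnn).mono fun _ hs => hs.2)
  have hB : AEMeasurable (fun s => quantile P ρ (1 - s)) (volume.restrict (Ioo 0 1)) :=
    aemeasurable_restrict_of_antitoneOn measurableSet_Ioo fun s hs t ht hst =>
      quantile_monotoneOn P hρnn (by simp [ht.1]) (by simp [hs.1]) (by linarith)
  calc ∫⁻ s in Ioo (0:ℝ) 1, ENNReal.ofReal (quantile P X s * quantile P ρ (1 - s))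
      = ∫⁻ s in Ioo (0:ℝ) 1,
          ENNReal.ofReal (quantile P X s) * ENNReal.ofReal (quantile P ρ (1 - s)) :=
        lintegral_congr fun s => ENNReal.ofReal_mul (quantile_nonneg P hXnn s)
    _ = _ := lintegral_ofReal_mul_ofReal_eq_lintegral_measure_of_aemeasurable _ hA hB
    _ ≤ _ := lintegral_mono
        fun uv => volume_restrict_lt_quantile_and_lt_quantile_one_sub_le P hXnn hρnn uv.1 uv.2
    _ = ∫⁻ ω, ENNReal.ofReal (X ω) * ENNReal.ofReal (ρ ω) ∂P :=
        (lintegral_ofReal_mul_ofReal_eq_lintegral_measure P hX hρ).symm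
    _ = ∫⁻ ω, ENNReal.ofReal (ρ ω * X ω) ∂P :=
        lintegral_congr fun ω => by rw [mul_comm (ρ ω), ENNReal.ofReal_mul (hXnn ω)]
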